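/- arXiv:1109.4532 — 4 statements merged into one kernel-verified Lean document; each statement's English description precedes it below -/
import Mathlib

section
/- The curvature tensor R of a Weyl structure (M,g,∇) of dimension m satisfies R(x,y,z,w) + R(x,y,w,z) = -(4/m)ρ_a(x,y)g(z,w), where ρ_a is the alternating part of the Ricci tensor. -/
noncomputable section

/-- We model an `m`-dimensional (pseudo-Riemannian) manifold chart as Euclidean space. -/
abbrev E (m : ℕ) := EuclideanSpace ℝ (Fin m)

/-- Vector fields. -/
abbrev VF (m : ℕ) := E m → E m

def SmoothVF {m : ℕ} (X : VF m) : Prop := ContDiff ℝ (⊤ : ℕ∞) X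

def SmoothF {m : ℕ} (f : E m → ℝ) : Prop := ContDiff ℝ (⊤ : ℕ∞) f

/-- The Lie bracket of vector fields. -/
def bracket {m : ℕ} (X Y : VF m) : VF m :=
  fun p => fderiv ℝ Y p (X p) - fderiv ℝ X p (Y p)

/-- A pseudo-Riemannian metric: a smooth, symmetric, nondegenerate field of bilinear forms. -/
structure IsMetric {m : ℕ} (g : E m → E m → E m → ℝ) : Prop where
  smooth : ∀ X Y : VF m, SmoothVF X → SmoothVF Y → SmoothF fun p => g p (X p) (Y p)
  linL : ∀ p w, IsLinearMap ℝ fun v => g p v w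
  linR : ∀ p v, IsLinearMap ℝ fun w => g p v w
  symm : ∀ p v w, g p v w = g p w v
  nondeg : ∀ p v, (∀ w, g p v w = 0) → v = 0

/-- The axioms of an affine connection (acting on smooth vector fields). -/
structure IsConnection {m : ℕ} (D : VF m → VF m → VF m) : Prop where
  smooth : ∀ X Y, SmoothVF X → SmoothVF Y → SmoothVF (D X Y)
  addX : ∀ X X' Y, SmoothVF X → SmoothVF X' → SmoothVF Y → D (X + X') Y = D X Y + D X' Y
  fsmulX : ∀ (f : E m → ℝ) (X Y : VF m), SmoothF f → SmoothVF X → SmoothVF Y →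
    D (fun p => f p • X p) Y = fun p => f p • D X Y p
  addY : ∀ X Y Y', SmoothVF X → SmoothVF Y → SmoothVF Y' → D X (Y + Y') = D X Y + D X Y'
  leibniz : ∀ (X Y : VF m) (f : E m → ℝ), SmoothVF X → SmoothVF Y → SmoothF f →
    D X (fun p => f p • Y p) = fun p => f p • D X Y p + fderiv ℝ f p (X p) • Y p

/-- Torsion-freeness of a connection. -/
def TorsionFree {m : ℕ} (D : VF m → VF m → VF m) : Prop :=
  ∀ X Y : VF m, SmoothVF X → SmoothVF Y → ∀ p, D X Y p - D Y X p = bracket X Y p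

/-- `(∇_X g)(Y,Z)` at the point `p`. -/
def covMetric {m : ℕ} (D : VF m → VF m → VF m) (g : E m → E m → E m → ℝ)
    (X Y Z : VF m) (p : E m) : ℝ :=
  fderiv ℝ (fun q => g q (Y q) (Z q)) p (X p) - g p (D X Y p) (Z p) - g p (Y p) (D X Z p)

/-- `D` is the Levi-Civita connection of `g`. -/
def IsLeviCivita {m : ℕ} (D : VF m → VF m → VF m) (g : E m → E m → E m → ℝ) : Prop :=
  IsConnection D ∧ TorsionFree D ∧
    ∀ X Y Z : VF m, SmoothVF X → SmoothVF Y → SmoothVF Z → ∀ p, covMetric D g X Y Z p = 0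

/-- The Weyl condition `∇ g = -2 φ ⊗ g`. -/
def WeylCompat {m : ℕ} (D : VF m → VF m → VF m) (g : E m → E m → E m → ℝ)
    (φ : E m → E m → ℝ) : Prop :=
  ∀ X Y Z : VF m, SmoothVF X → SmoothVF Y → SmoothVF Z → ∀ p,
    covMetric D g X Y Z p = -2 * φ p (X p) * g p (Y p) (Z p)

/-- A smooth field of 1-forms. -/
structure IsOneForm {m : ℕ} (φ : E m → E m → ℝ) : Prop where
  lin : ∀ p, IsLinearMap ℝ (φ p)
  smooth : ∀ X : VF m, SmoothVF X → SmoothF fun p => φ p (X p)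

/-- The connection `∇_X Y = ∇^g_X Y + φ(X)Y + φ(Y)X - g(X,Y)φ*`. -/
def weylD {m : ℕ} (Dg : VF m → VF m → VF m) (g : E m → E m → E m → ℝ)
    (φ : E m → E m → ℝ) (φs : VF m) : VF m → VF m → VF m :=
  fun X Y p => Dg X Y p + φ p (X p) • Y p + φ p (Y p) • X p - g p (X p) (Y p) • φs p

/-- The curvature operator `R(X,Y)Z` of the connection `D`. -/
def Rop {m : ℕ} (D : VF m → VF m → VF m) (X Y Z : VF m) : VF m :=
  fun p => D X (D Y Z) p - D Y (D X Z) p - D (bracket X Y) Z p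

/-- The constant vector field with value `v`. -/
def cVF {m : ℕ} (v : E m) : VF m := fun _ => v

/-- The standard basis of Euclidean space. -/
def bb {m : ℕ} (i : Fin m) : E m := EuclideanSpace.single i (1 : ℝ)

/-- The Ricci tensor `ρ(x,y) = Tr{z ↦ R(z,x)y}` of the connection `D`
(computed at `p` using the standard coordinate trace). -/
def Ric {m : ℕ} (D : VF m → VF m → VF m) (x y : E m) (p : E m) : ℝ :=
  ∑ i, (Rop D (cVF (bb i)) (cVF x) (cVF y) p) i

/-- The alternating part `ρ_a` of the Ricci tensor. -/
def RicA {m : ℕ} (D : VF m → VF m → VF m) (x y : E m) (p : E m) : ℝ :=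
  (Ric D x y p - Ric D y x p) / 2

/-! ### Auxiliary lemmas -/

open Matrix

@[simp] lemma cVF_apply {m : ℕ} (v q : E m) : cVF v q = v := rfl

lemma smooth_cVF {m : ℕ} (v : E m) : SmoothVF (cVF v) := contDiff_const

lemma bracket_cVF {m : ℕ} (x y : E m) : bracket (cVF x) (cVF y) = fun _ => (0 : E m) := by
  funext q
  simp [bracket, show cVF y = fun _ => y from rfl, show cVF x = fun _ => x from rfl]

lemma D_zero_left {m : ℕ} {D : VF m → VF m → VF m} (hD : IsConnection D)
    {Z : VF m} (hZ : SmoothVF Z) : D (fun _ => (0 : E m)) Z = fun _ => 0 := by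
  have h := hD.fsmulX (fun _ => (0 : ℝ)) Z Z contDiff_const hZ hZ
  simpa using h

lemma Rop_c {m : ℕ} {D : VF m → VF m → VF m} (hD : IsConnection D) (x y z : E m) (p : E m) :
    Rop D (cVF x) (cVF y) (cVF z) p
      = D (cVF x) (D (cVF y) (cVF z)) p - D (cVF y) (D (cVF x) (cVF z)) p := by
  have h0 : D (bracket (cVF x) (cVF y)) (cVF z) = fun _ => 0 := by
    rw [bracket_cVF]
    exact D_zero_left hD (smooth_cVF z)
  simp [Rop, h0]

lemma D_comm {m : ℕ} {D : VF m → VF m → VF m} (hDT : TorsionFree D) (a b : E m) :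
    D (cVF a) (cVF b) = D (cVF b) (cVF a) := by
  funext q
  have h := hDT (cVF a) (cVF b) (smooth_cVF a) (smooth_cVF b) q
  rw [bracket_cVF] at h
  exact sub_eq_zero.mp h

lemma sum_apply' {m : ℕ} (f : Fin m → E m) (i : Fin m) :
    (∑ k, f k) i = ∑ k, f k i :=
  by rw [WithLp.ofLp_sum]; exact Finset.sum_apply i Finset.univ (fun k => (f k).ofLp)

lemma coord_sum {m : ℕ} (u : E m) : ∑ k, u k • bb k = u := by
  ext i
  rw [sum_apply']
  simp [bb, EuclideanSpace.single_apply]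

lemma g_expand {m : ℕ} {g : E m → E m → E m → ℝ} (hg : IsMetric g) (p v u : E m) :
    g p v u = ∑ k, g p v (bb k) * u k := by
  let L : E m →ₗ[ℝ] ℝ := IsLinearMap.mk' _ (hg.linR p v)
  calc g p v u = L u := rfl
    _ = L (∑ k, u k • bb k) := by rw [coord_sum]
    _ = ∑ k, L (u k • bb k) := map_sum L _ _
    _ = ∑ k, g p v (bb k) * u k := by
        refine Finset.sum_congr rfl fun k _ => ?_
        rw [_root_.map_smul, smul_eq_mul]
        exact mul_comm _ _

lemma W1 {m : ℕ} {g : E m → E m → E m → ℝ} {D : VF m → VF m → VF m} {φ : E m → E m → ℝ}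
    (hW : WeylCompat D g φ) (x' : E m) (Y' Z' : VF m) (hY' : SmoothVF Y') (hZ' : SmoothVF Z')
    (q : E m) :
    fderiv ℝ (fun r => g r (Y' r) (Z' r)) q x'
      = g q (D (cVF x') Y' q) (Z' q) + g q (Y' q) (D (cVF x') Z' q)
        - 2 * φ q x' * g q (Y' q) (Z' q) := by
  have h := hW (cVF x') Y' Z' (smooth_cVF x') hY' hZ' q
  unfold covMetric at h
  simp only [cVF_apply] at h
  linarith

/-- The key identity: symmetrization of the curvature in the last two slots. -/
lemma star_id {m : ℕ} {g : E m → E m → E m → ℝ} (hg : IsMetric g)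
    {D : VF m → VF m → VF m} (hD : IsConnection D)
    {φ : E m → E m → ℝ} (hφ : IsOneForm φ) (hW : WeylCompat D g φ)
    (x y z w : E m) (p : E m) :
    g p (Rop D (cVF x) (cVF y) (cVF z) p) w + g p (Rop D (cVF x) (cVF y) (cVF w) p) z
      = 2 * (fderiv ℝ (fun q => φ q y) p x - fderiv ℝ (fun q => φ q x) p y) * g p z w := by
  classical
  have hsx := smooth_cVF (m := m) x
  have hsy := smooth_cVF (m := m) y
  have hsz := smooth_cVF (m := m) z
  have hsw := smooth_cVF (m := m) w
  have sZx : SmoothVF (D (cVF x) (cVF z)) := hD.smooth _ _ hsx hsz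
  have sZy : SmoothVF (D (cVF y) (cVF z)) := hD.smooth _ _ hsy hsz
  have sWx : SmoothVF (D (cVF x) (cVF w)) := hD.smooth _ _ hsx hsw
  have sWy : SmoothVF (D (cVF y) (cVF w)) := hD.smooth _ _ hsy hsw
  have diffg : ∀ (Y' Z' : VF m), SmoothVF Y' → SmoothVF Z' →
      Differentiable ℝ (fun r => g r (Y' r) (Z' r)) :=
    fun Y' Z' h1 h2 => (hg.smooth Y' Z' h1 h2).differentiable (by simp)
  have diffφ : ∀ (Y' : VF m), SmoothVF Y' →
      Differentiable ℝ (fun r => φ r (Y' r)) :=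
    fun Y' h1 => (hφ.smooth Y' h1).differentiable (by simp)
  -- first-order expansions
  have e0 : ∀ (q x' : E m), fderiv ℝ (fun r => g r z w) q x'
      = g q (D (cVF x') (cVF z) q) w + g q z (D (cVF x') (cVF w) q)
        - 2 * φ q x' * g q z w := by
    intro q x'
    have h1 := W1 hW x' (cVF z) (cVF w) hsz hsw q
    simp only [cVF_apply] at h1
    exact h1
  have eZy : ∀ (q x' : E m), fderiv ℝ (fun r => g r (D (cVF y) (cVF z) r) w) q x'
      = g q (D (cVF x') (D (cVF y) (cVF z)) q) w
        + g q (D (cVF y) (cVF z) q) (D (cVF x') (cVF w) q)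
        - 2 * φ q x' * g q (D (cVF y) (cVF z) q) w := by
    intro q x'
    have h1 := W1 hW x' (D (cVF y) (cVF z)) (cVF w) sZy hsw q
    simp only [cVF_apply] at h1
    exact h1
  have eZx : ∀ (q x' : E m), fderiv ℝ (fun r => g r (D (cVF x) (cVF z) r) w) q x'
      = g q (D (cVF x') (D (cVF x) (cVF z)) q) w
        + g q (D (cVF x) (cVF z) q) (D (cVF x') (cVF w) q)
        - 2 * φ q x' * g q (D (cVF x) (cVF z) q) w := by
    intro q x'
    have h1 := W1 hW x' (D (cVF x) (cVF z)) (cVF w) sZx hsw q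
    simp only [cVF_apply] at h1
    exact h1
  have eWy : ∀ (q x' : E m), fderiv ℝ (fun r => g r z (D (cVF y) (cVF w) r)) q x'
      = g q (D (cVF x') (cVF z) q) (D (cVF y) (cVF w) q)
        + g q z (D (cVF x') (D (cVF y) (cVF w)) q)
        - 2 * φ q x' * g q z (D (cVF y) (cVF w) q) := by
    intro q x'
    have h1 := W1 hW x' (cVF z) (D (cVF y) (cVF w)) hsz sWy q
    simp only [cVF_apply] at h1
    exact h1
  have eWx : ∀ (q x' : E m), fderiv ℝ (fun r => g r z (D (cVF x) (cVF w) r)) q x'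
      = g q (D (cVF x') (cVF z) q) (D (cVF x) (cVF w) q)
        + g q z (D (cVF x') (D (cVF x) (cVF w)) q)
        - 2 * φ q x' * g q z (D (cVF x) (cVF w) q) := by
    intro q x'
    have h1 := W1 hW x' (cVF z) (D (cVF x) (cVF w)) hsz sWx q
    simp only [cVF_apply] at h1
    exact h1
  -- HasFDerivAt facts at p
  have Hh : HasFDerivAt (fun r => g r z w) (fderiv ℝ (fun r => g r z w) p) p :=
    ((diffg (cVF z) (cVF w) hsz hsw) p).hasFDerivAt
  have HZy : HasFDerivAt (fun r => g r (D (cVF y) (cVF z) r) w)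
      (fderiv ℝ (fun r => g r (D (cVF y) (cVF z) r) w) p) p :=
    ((diffg (D (cVF y) (cVF z)) (cVF w) sZy hsw) p).hasFDerivAt
  have HZx : HasFDerivAt (fun r => g r (D (cVF x) (cVF z) r) w)
      (fderiv ℝ (fun r => g r (D (cVF x) (cVF z) r) w) p) p :=
    ((diffg (D (cVF x) (cVF z)) (cVF w) sZx hsw) p).hasFDerivAt
  have HWy : HasFDerivAt (fun r => g r z (D (cVF y) (cVF w) r))
      (fderiv ℝ (fun r => g r z (D (cVF y) (cVF w) r)) p) p :=
    ((diffg (cVF z) (D (cVF y) (cVF w)) hsz sWy) p).hasFDerivAt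
  have HWx : HasFDerivAt (fun r => g r z (D (cVF x) (cVF w) r))
      (fderiv ℝ (fun r => g r z (D (cVF x) (cVF w) r)) p) p :=
    ((diffg (cVF z) (D (cVF x) (cVF w)) hsz sWx) p).hasFDerivAt
  have Hφy : HasFDerivAt (fun r => φ r y) (fderiv ℝ (fun r => φ r y) p) p :=
    ((diffφ (cVF y) hsy) p).hasFDerivAt
  have Hφx : HasFDerivAt (fun r => φ r x) (fderiv ℝ (fun r => φ r x) p) p :=
    ((diffφ (cVF x) hsx) p).hasFDerivAt
  -- second derivative is symmetric
  have hh : ContDiff ℝ (⊤ : ℕ∞) (fun r => g r z w) := hg.smooth (cVF z) (cVF w) hsz hsw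
  have hf' : ∀ q, HasFDerivAt (fun r => g r z w) (fderiv ℝ (fun r => g r z w) q) q :=
    fun q => ((hh.differentiable (by simp)) q).hasFDerivAt
  have hf'c : ContDiff ℝ 1 (fderiv ℝ (fun r => g r z w)) := hh.fderiv_right (WithTop.coe_le_coe.mpr (le_top : (((1 + 1 : ℕ) : ℕ∞)) ≤ ⊤))
  have hf'' : HasFDerivAt (fderiv ℝ (fun r => g r z w))
      (fderiv ℝ (fderiv ℝ (fun r => g r z w)) p) p :=
    ((hf'c.differentiable (by simp)) p).hasFDerivAt
  have hsym := second_derivative_symmetric hf' hf'' x y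
  have key : ∀ v : E m, fderiv ℝ (fun q => fderiv ℝ (fun r => g r z w) q v) p
      = (fderiv ℝ (fun r => g r z w) p).comp (0 : E m →L[ℝ] E m)
        + (fderiv ℝ (fderiv ℝ (fun r => g r z w)) p).flip v :=
    fun v => (hf''.clm_apply (hasFDerivAt_const v p)).fderiv
  have ES : fderiv ℝ (fun q => fderiv ℝ (fun r => g r z w) q y) p x
      = fderiv ℝ (fun q => fderiv ℝ (fun r => g r z w) q x) p y := by
    rw [key y, key x]
    simp only [ContinuousLinearMap.add_apply, ContinuousLinearMap.comp_zero,
      ContinuousLinearMap.zero_apply, ContinuousLinearMap.flip_apply, zero_add]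
    exact hsym
  -- expansion of the mixed second derivative, first version
  have hfun1 : (fun q => fderiv ℝ (fun r => g r z w) q y)
      = fun q => g q (D (cVF y) (cVF z) q) w + g q z (D (cVF y) (cVF w) q)
          - 2 * (φ q y * g q z w) := by
    funext q
    rw [e0 q y]
    ring
  have hfun2 : (fun q => fderiv ℝ (fun r => g r z w) q x)
      = fun q => g q (D (cVF x) (cVF z) q) w + g q z (D (cVF x) (cVF w) q)
          - 2 * (φ q x * g q z w) := by
    funext q
    rw [e0 q x]
    ring
  have hd1 : fderiv ℝ (fun q => g q (D (cVF y) (cVF z) q) w + g q z (D (cVF y) (cVF w) q)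
          - 2 * (φ q y * g q z w)) p
      = fderiv ℝ (fun r => g r (D (cVF y) (cVF z) r) w) p
        + fderiv ℝ (fun r => g r z (D (cVF y) (cVF w) r)) p
        - (2 : ℝ) • (φ p y • fderiv ℝ (fun r => g r z w) p
            + g p z w • fderiv ℝ (fun r => φ r y) p) :=
    HasFDerivAt.fderiv ((HZy.add HWy).sub ((Hφy.mul Hh).const_mul (2 : ℝ)))
  have hd2 : fderiv ℝ (fun q => g q (D (cVF x) (cVF z) q) w + g q z (D (cVF x) (cVF w) q)
          - 2 * (φ q x * g q z w)) p
      = fderiv ℝ (fun r => g r (D (cVF x) (cVF z) r) w) p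
        + fderiv ℝ (fun r => g r z (D (cVF x) (cVF w) r)) p
        - (2 : ℝ) • (φ p x • fderiv ℝ (fun r => g r z w) p
            + g p z w • fderiv ℝ (fun r => φ r x) p) :=
    HasFDerivAt.fderiv ((HZx.add HWx).sub ((Hφx.mul Hh).const_mul (2 : ℝ)))
  have E1 : fderiv ℝ (fun q => fderiv ℝ (fun r => g r z w) q y) p x
      = (g p (D (cVF x) (D (cVF y) (cVF z)) p) w
          + g p (D (cVF y) (cVF z) p) (D (cVF x) (cVF w) p)
          - 2 * φ p x * g p (D (cVF y) (cVF z) p) w)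
        + (g p (D (cVF x) (cVF z) p) (D (cVF y) (cVF w) p)
          + g p z (D (cVF x) (D (cVF y) (cVF w)) p)
          - 2 * φ p x * g p z (D (cVF y) (cVF w) p))
        - 2 * (φ p y * (g p (D (cVF x) (cVF z) p) w + g p z (D (cVF x) (cVF w) p)
              - 2 * φ p x * g p z w)
            + g p z w * fderiv ℝ (fun r => φ r y) p x) := by
    rw [hfun1, hd1]
    simp only [ContinuousLinearMap.add_apply, ContinuousLinearMap.sub_apply,
      ContinuousLinearMap.smul_apply, smul_eq_mul]
    rw [eZy p x, eWy p x, e0 p x]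
  have E2 : fderiv ℝ (fun q => fderiv ℝ (fun r => g r z w) q x) p y
      = (g p (D (cVF y) (D (cVF x) (cVF z)) p) w
          + g p (D (cVF x) (cVF z) p) (D (cVF y) (cVF w) p)
          - 2 * φ p y * g p (D (cVF x) (cVF z) p) w)
        + (g p (D (cVF y) (cVF z) p) (D (cVF x) (cVF w) p)
          + g p z (D (cVF y) (D (cVF x) (cVF w)) p)
          - 2 * φ p y * g p z (D (cVF x) (cVF w) p))
        - 2 * (φ p x * (g p (D (cVF y) (cVF z) p) w + g p z (D (cVF y) (cVF w) p)
              - 2 * φ p y * g p z w)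
            + g p z w * fderiv ℝ (fun r => φ r x) p y) := by
    rw [hfun2, hd2]
    simp only [ContinuousLinearMap.add_apply, ContinuousLinearMap.sub_apply,
      ContinuousLinearMap.smul_apply, smul_eq_mul]
    rw [eZx p y, eWx p y, e0 p y]
  have hEq := ES
  rw [E1, E2] at hEq
  have lin1 : ∀ (a b w' : E m), g p (a - b) w' = g p a w' - g p b w' :=
    fun a b w' => (IsLinearMap.mk' _ (hg.linL p w')).map_sub a b
  rw [Rop_c hD x y z p, Rop_c hD x y w p, lin1, lin1,
    hg.symm p (D (cVF x) (D (cVF y) (cVF w)) p) z,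
    hg.symm p (D (cVF y) (D (cVF x) (cVF w)) p) z]
  linear_combination hEq

lemma ricA_eq {m : ℕ} {D : VF m → VF m → VF m} (hD : IsConnection D) (hDT : TorsionFree D)
    (x y : E m) (p : E m) :
    RicA D x y p = -(∑ i, (Rop D (cVF x) (cVF y) (cVF (bb i)) p) i) / 2 := by
  have key : ∀ e : E m,
      Rop D (cVF e) (cVF x) (cVF y) p - Rop D (cVF e) (cVF y) (cVF x) p
        = -(Rop D (cVF x) (cVF y) (cVF e) p) := by
    intro e
    simp only [Rop_c hD]
    rw [D_comm hDT y x, D_comm hDT e y, D_comm hDT e x]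
    abel
  have h2 : ∀ i : Fin m,
      (Rop D (cVF (bb i)) (cVF x) (cVF y) p) i - (Rop D (cVF (bb i)) (cVF y) (cVF x) p) i
        = -((Rop D (cVF x) (cVF y) (cVF (bb i)) p) i) := by
    intro i
    have h3 := congrArg (fun v : E m => v i) (key (bb i))
    simpa using h3
  have h4 : (∑ i, (Rop D (cVF (bb i)) (cVF x) (cVF y) p) i)
        - ∑ i, (Rop D (cVF (bb i)) (cVF y) (cVF x) p) i
      = -∑ i, (Rop D (cVF x) (cVF y) (cVF (bb i)) p) i := by
    rw [← Finset.sum_sub_distrib]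
    rw [Finset.sum_congr rfl fun i _ => h2 i]
    simp
  unfold RicA Ric
  rw [h4]

/-- the curvature tensor of a Weyl structure satisfies
`R(x,y,z,w) + R(x,y,w,z) = -(4/m) ρ_a(x,y) g(z,w)`. -/
theorem statement3 {m : ℕ} (g : E m → E m → E m → ℝ) (hg : IsMetric g)
    (D : VF m → VF m → VF m) (hD : IsConnection D) (hDT : TorsionFree D)
    (φ : E m → E m → ℝ) (hφ : IsOneForm φ) (hW : WeylCompat D g φ) :
    ∀ (x y z w : E m) (p : E m),
      g p (Rop D (cVF x) (cVF y) (cVF z) p) w + g p (Rop D (cVF x) (cVF y) (cVF w) p) z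
        = -(4 / (m : ℝ)) * RicA D x y p * g p z w := by
  intro x y z w p
  rcases eq_or_ne m 0 with hm0 | hm0
  · subst hm0
    have h0 : ∀ v w' : E 0, g p v w' = 0 := by
      intro v w'
      have hv : v = (0 : E 0) := by
        ext i
        exact i.elim0
      rw [hv]
      exact (IsLinearMap.mk' _ (hg.linL p w')).map_zero
    rw [h0, h0, h0]
    ring
  · have hm' : (m : ℝ) ≠ 0 := Nat.cast_ne_zero.mpr hm0
    set F : ℝ := fderiv ℝ (fun q => φ q y) p x - fderiv ℝ (fun q => φ q x) p y with hF
    set G : Matrix (Fin m) (Fin m) ℝ := fun i j => g p (bb i) (bb j) with hG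
    set M : Matrix (Fin m) (Fin m) ℝ :=
      fun i j => g p (bb i) (Rop D (cVF x) (cVF y) (cVF (bb j)) p) with hM
    set Rm : Matrix (Fin m) (Fin m) ℝ :=
      fun i j => (Rop D (cVF x) (cVF y) (cVF (bb j)) p) i with hRm
    have hGt : Gᵀ = G := by
      ext i j
      simp only [Matrix.transpose_apply, hG]
      exact hg.symm p (bb j) (bb i)
    have hdet : G.det ≠ 0 := by
      intro hdet0
      obtain ⟨v, hvne, hv⟩ := Matrix.exists_mulVec_eq_zero_iff.mpr hdet0
      have hcoord : ∀ i, (∑ j, v j • bb j : E m) i = v i := by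
        intro i
        rw [sum_apply']
        simp [bb, EuclideanSpace.single_apply]
      have hgu : ∀ i, g p (bb i) (∑ j, v j • bb j) = 0 := by
        intro i
        rw [g_expand hg p (bb i) (∑ j, v j • bb j)]
        have hvi := congrFun hv i
        simp only [Matrix.mulVec, dotProduct, hG, Pi.zero_apply] at hvi
        calc (∑ k, g p (bb i) (bb k) * (∑ j, v j • bb j : E m) k)
            = ∑ k, g p (bb i) (bb k) * v k := by
              refine Finset.sum_congr rfl fun k _ => ?_
              rw [hcoord k]
          _ = 0 := hvi
      have hgu' : ∀ w', g p (∑ j, v j • bb j : E m) w' = 0 := by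
        intro w'
        rw [g_expand hg p _ w']
        refine Finset.sum_eq_zero fun k _ => ?_
        rw [hg.symm p _ (bb k), hgu k, zero_mul]
      have hu0 := hg.nondeg p _ hgu'
      apply hvne
      funext i
      have := congrArg (fun v' : E m => v' i) hu0
      simpa [hcoord i] using this
    have hunit : IsUnit G.det := isUnit_iff_ne_zero.mpr hdet
    have hMs : M + Mᵀ = (2 * F) • G := by
      ext i j
      simp only [Matrix.add_apply, Matrix.transpose_apply, Matrix.smul_apply, smul_eq_mul,
        hM, hG]
      have hs := star_id hg hD hφ hW x y (bb j) (bb i) p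
      rw [← hF] at hs
      rw [hg.symm p (bb j) (bb i)] at hs
      have s1 := hg.symm p (Rop D (cVF x) (cVF y) (cVF (bb j)) p) (bb i)
      have s2 := hg.symm p (Rop D (cVF x) (cVF y) (cVF (bb i)) p) (bb j)
      show g p (bb i) (Rop D (cVF x) (cVF y) (cVF (bb j)) p)
          + g p (bb j) (Rop D (cVF x) (cVF y) (cVF (bb i)) p) = 2 * F * g p (bb i) (bb j)
      linarith [hs, s1, s2]
    have hGR : G * Rm = M := by
      ext i j
      rw [Matrix.mul_apply]
      simp only [hG, hRm, hM]
      exact (g_expand hg p (bb i) (Rop D (cVF x) (cVF y) (cVF (bb j)) p)).symm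
    have hRmEq : Rm = G⁻¹ * M := by
      rw [← hGR, ← Matrix.mul_assoc, Matrix.nonsing_inv_mul _ hunit, Matrix.one_mul]
    have ht2 : (G⁻¹ * Mᵀ).trace = (G⁻¹ * M).trace := by
      calc (G⁻¹ * Mᵀ).trace = ((G⁻¹ * Mᵀ)ᵀ).trace := (Matrix.trace_transpose _).symm
        _ = (M * G⁻¹).trace := by
            rw [Matrix.transpose_mul, Matrix.transpose_transpose,
              Matrix.transpose_nonsing_inv, hGt]
        _ = (G⁻¹ * M).trace := Matrix.trace_mul_comm _ _
    have hsumtr : (G⁻¹ * M).trace + (G⁻¹ * M).trace = 2 * F * (m : ℝ) := by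
      have hMM : G⁻¹ * M + G⁻¹ * Mᵀ = (2 * F) • (1 : Matrix (Fin m) (Fin m) ℝ) := by
        rw [← Matrix.mul_add, hMs, Matrix.mul_smul, Matrix.nonsing_inv_mul _ hunit]
      have h2 := congrArg Matrix.trace hMM
      rw [Matrix.trace_add, Matrix.trace_smul, Matrix.trace_one, ht2] at h2
      rw [h2]
      simp [Fintype.card_fin]
    have htr : (∑ i, (Rop D (cVF x) (cVF y) (cVF (bb i)) p) i) = F * (m : ℝ) := by
      have htrRm : Rm.trace = F * (m : ℝ) := by
        rw [hRmEq]
        linarith [hsumtr]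
      rw [← htrRm]
      simp [Matrix.trace, Matrix.diag, hRm]
    have hric : RicA D x y p = -(F * (m : ℝ)) / 2 := by
      rw [ricA_eq hD hDT, htr]
    have hs := star_id hg hD hφ hW x y z w p
    rw [← hF] at hs
    rw [hs, hric]
    field_simp
    ring
end
end

section
/- Let (V,⟨·,·⟩,J) be a para/pseudo-Hermitian vector space of dimension m ≥ 4. The map σ : V* → ⊗³V* defined by σ(φ)(x,y;z) := φ(Jx)⟨y,z⟩ - φ(Jy)⟨x,z⟩ + φ(x)⟨Jy,z⟩ - φ(y)⟨Jx,z⟩ is injective. -/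
/-- `σ(φ)(x,y;z) := φ(Jx)⟨y,z⟩ - φ(Jy)⟨x,z⟩ + φ(x)⟨Jy,z⟩ - φ(y)⟨Jx,z⟩`. -/
def sigmaMap {V : Type*} [AddCommGroup V] [Module ℝ V]
    (B : V →ₗ[ℝ] V →ₗ[ℝ] ℝ) (J : V →ₗ[ℝ] V) (φ : V →ₗ[ℝ] ℝ) (x y z : V) : ℝ :=
  φ (J x) * B y z - φ (J y) * B x z + φ x * B (J y) z - φ y * B (J x) z

/-!
Since `σ(φ)(x,y;z) = ⟨w(x,y), z⟩` with `w(x,y) = φ(Jx) y - φ(Jy) x + φ(x) Jy - φ(y) Jx`,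
nondegeneracy turns `σ(φ) = 0` into `w = 0`. Suppose `φ(y₀) ≠ 0`, put `c = -φ(Jy₀)/φ(y₀)` and,
using `m ≥ 4`, pick `x ≠ 0` with `φ(x) = φ(Jx) = 0` and `⟨x, Jy₀ - c y₀⟩ = 0`. Then `w(x,y₀) = 0`
makes `x` an eigenvector of `J`, `Jx = c x` with `c² = ε`; next `w(x,y) = 0` gives `φ ∘ J = -c φ`,
and `w(y₀,y) = 0` gives `J y ≡ c y` modulo multiples of `Jy₀ - c y₀`, so `⟨x, Jy⟩ = c ⟨x, y⟩`.
On the other hand `⟨Jx, Jy⟩ = -ε ⟨x, y⟩` gives `⟨x, Jy⟩ = -c ⟨x, y⟩`. As `c ≠ 0`, `x` is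
orthogonal to everything, a contradiction.
-/

section

variable {V : Type*} [AddCommGroup V] [Module ℝ V]

def sigmaVec (J : V →ₗ[ℝ] V) (φ : V →ₗ[ℝ] ℝ) (x y : V) : V :=
  φ (J x) • y - φ (J y) • x + φ x • J y - φ y • J x

lemma sigmaMap_eq_apply_sigmaVec (B : V →ₗ[ℝ] V →ₗ[ℝ] ℝ) (J : V →ₗ[ℝ] V) (φ : V →ₗ[ℝ] ℝ)
    (x y z : V) : sigmaMap B J φ x y z = B (sigmaVec J φ x y) z := by
  simp only [sigmaMap, sigmaVec, map_add, map_sub, map_smul, LinearMap.add_apply,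
    LinearMap.sub_apply, LinearMap.smul_apply, smul_eq_mul]

lemma sigmaVec_sub (J : V →ₗ[ℝ] V) (φ ψ : V →ₗ[ℝ] ℝ) (x y : V) :
    sigmaVec J (φ - ψ) x y = sigmaVec J φ x y - sigmaVec J ψ x y := by
  simp only [sigmaVec, LinearMap.sub_apply, sub_smul]
  abel

section SigmaVecEqZero

variable {J : V →ₗ[ℝ] V} {φ : V →ₗ[ℝ] ℝ} (h : ∀ x y, sigmaVec J φ x y = 0)
include h

lemma smul_apply_eq_of_sigmaVec_eq_zero {x : V} (hx : φ x = 0) (hJx : φ (J x) = 0) (y : V) :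
    φ y • J x = -φ (J y) • x := by
  have hxy := h x y
  simp only [sigmaVec, hx, hJx, zero_smul] at hxy
  linear_combination (norm := module) -hxy

lemma comp_eq_smul_of_sigmaVec_eq_zero {x : V} (hx0 : x ≠ 0) (hx : φ x = 0) (hJx : φ (J x) = 0)
    {c : ℝ} (hc : J x = c • x) : φ ∘ₗ J = -c • φ := by
  ext y
  have hy := smul_apply_eq_of_sigmaVec_eq_zero h hx hJx y
  rw [hc, smul_smul] at hy
  have hsum : (φ (J y) + c * φ y) • x = 0 := by linear_combination (norm := module) hy
  simp only [LinearMap.comp_apply, LinearMap.smul_apply, smul_eq_mul]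
  linarith [(smul_eq_zero.mp hsum).resolve_right hx0]

lemma smul_apply_eq_of_comp_eq_smul {c : ℝ} (hφJ : φ ∘ₗ J = -c • φ) (y₀ y : V) :
    φ y₀ • J y = (c * φ y₀) • y + φ y • (J y₀ - c • y₀) := by
  have hy := h y₀ y
  have hφJ' (v : V) : φ (J v) = -c * φ v := by simpa using LinearMap.congr_fun hφJ v
  simp only [sigmaVec, hφJ'] at hy
  linear_combination (norm := module) hy

end SigmaVecEqZero

lemma mul_self_eq_of_apply_eq_smul {J : V →ₗ[ℝ] V} {ε : ℝ} (hJ2 : ∀ x, J (J x) = ε • x)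
    {x : V} (hx0 : x ≠ 0) {c : ℝ} (hc : J x = c • x) : c * c = ε := by
  have hJJ := hJ2 x
  rw [hc, map_smul, hc, smul_smul] at hJJ
  exact smul_left_injective ℝ hx0 hJJ

lemma apply_apply_eq_neg_mul_of_apply_eq_smul {B : V →ₗ[ℝ] V →ₗ[ℝ] ℝ} {J : V →ₗ[ℝ] V} {ε : ℝ}
    (hJB : ∀ x y, B (J x) (J y) = -ε * B x y) {x : V} {c : ℝ} (hc : J x = c • x)
    (hcc : c * c = ε) (hc0 : c ≠ 0) (y : V) : B x (J y) = -c * B x y := by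
  have hxy := hJB x y
  rw [hc, map_smul, LinearMap.smul_apply, smul_eq_mul, ← hcc] at hxy
  exact mul_left_cancel₀ hc0 (by linear_combination hxy)

theorem eq_zero_of_sigmaVec_eq_zero [FiniteDimensional ℝ V] (hm : 4 ≤ Module.finrank ℝ V)
    {B : V →ₗ[ℝ] V →ₗ[ℝ] ℝ} (hBn : ∀ v, (∀ w, B v w = 0) → v = 0)
    {J : V →ₗ[ℝ] V} {ε : ℝ} (hε : ε ≠ 0) (hJ2 : ∀ x, J (J x) = ε • x)
    (hJB : ∀ x y, B (J x) (J y) = -ε * B x y)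
    {φ : V →ₗ[ℝ] ℝ} (h : ∀ x y, sigmaVec J φ x y = 0) : φ = 0 := by
  by_contra hφ
  obtain ⟨y₀, hy₀⟩ : ∃ y₀, φ y₀ ≠ 0 := by simpa [LinearMap.ext_iff] using hφ
  set c := (φ y₀)⁻¹ * -φ (J y₀)
  obtain ⟨x, hx, hx0⟩ := (Submodule.ne_bot_iff _).mp <|
    LinearMap.ker_ne_bot_of_finrank_lt (f := φ.prod ((φ ∘ₗ J).prod (B.flip (J y₀ - c • y₀))))
      (by simp only [Module.finrank_prod, Module.finrank_self]; omega)
  simp only [LinearMap.mem_ker, LinearMap.prod_apply, Function.prod, LinearMap.comp_apply,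
    LinearMap.flip_apply, Prod.mk_eq_zero] at hx
  obtain ⟨hφx, hφJx, hxu⟩ := hx
  have hJx : J x = c • x := by
    rw [mul_smul, ← smul_apply_eq_of_sigmaVec_eq_zero h hφx hφJx y₀, inv_smul_smul₀ hy₀]
  have hcc := mul_self_eq_of_apply_eq_smul hJ2 hx0 hJx
  have hφJ := comp_eq_smul_of_sigmaVec_eq_zero h hx0 hφx hφJx hJx
  have hBxJ (y : V) : B x (J y) = c * B x y := by
    have hy := congrArg (B x) (smul_apply_eq_of_comp_eq_smul h hφJ y₀ y)
    simp only [map_add, map_smul, hxu, smul_eq_mul, mul_zero, add_zero] at hy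
    exact mul_left_cancel₀ hy₀ (by linear_combination hy)
  have hc0 : c ≠ 0 := left_ne_zero_of_mul (hcc ▸ hε)
  refine hx0 (hBn x fun y => ?_)
  have hneg := apply_apply_eq_neg_mul_of_apply_eq_smul hJB hJx hcc hc0 y
  have h2c : (2 * c) * B x y = 0 := by linear_combination hneg - hBxJ y
  exact (mul_eq_zero.mp h2c).resolve_left (mul_ne_zero two_ne_zero hc0)

end

theorem statement7_general {V : Type*} [AddCommGroup V] [Module ℝ V] [FiniteDimensional ℝ V]
    (hm : 4 ≤ Module.finrank ℝ V)
    (B : V →ₗ[ℝ] V →ₗ[ℝ] ℝ)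
    (hBn : ∀ v, (∀ w, B v w = 0) → v = 0)
    (J : V →ₗ[ℝ] V) (ε : ℝ) (hε : ε = 1 ∨ ε = -1)
    (hJ2 : ∀ x, J (J x) = ε • x)
    (hJB : ∀ x y, B (J x) (J y) = -ε * B x y) :
    Function.Injective fun (φ : V →ₗ[ℝ] ℝ) => fun x y z => sigmaMap B J φ x y z := by
  intro φ ψ hφψ
  have hε0 : ε ≠ 0 := by rcases hε with rfl | rfl <;> norm_num
  have hsigma (x y : V) : sigmaVec J (φ - ψ) x y = 0 := hBn _ fun z => by
    rw [sigmaVec_sub, map_sub, LinearMap.sub_apply, ← sigmaMap_eq_apply_sigmaVec,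
      ← sigmaMap_eq_apply_sigmaVec]
    exact sub_eq_zero.mpr (congrFun₃ hφψ x y z)
  exact sub_eq_zero.mp (eq_zero_of_sigmaVec_eq_zero hm hBn hε0 hJ2 hJB hsigma)

/-- for `m = dim V ≥ 4`, the map `σ : V* → ⊗³V*` is injective. -/
theorem statement7 {V : Type*} [AddCommGroup V] [Module ℝ V] [FiniteDimensional ℝ V]
    (hm : 4 ≤ Module.finrank ℝ V)
    (B : V →ₗ[ℝ] V →ₗ[ℝ] ℝ) (hBs : ∀ x y, B x y = B y x)
    (hBn : ∀ v, (∀ w, B v w = 0) → v = 0)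
    (J : V →ₗ[ℝ] V) (ε : ℝ) (hε : ε = 1 ∨ ε = -1)
    (hJ2 : ∀ x, J (J x) = ε • x)
    (hJB : ∀ x y, B (J x) (J y) = -ε * B x y) :
    Function.Injective fun (φ : V →ₗ[ℝ] ℝ) => fun x y z => sigmaMap B J φ x y z :=
  statement7_general hm B hBn J ε hε hJ2 hJB
end

section
/- Let (M,g,J) be a para/pseudo-Hermitian manifold with Kähler form Ω, and suppose ∇ᵍΩ = σ(φ) for a smooth 1-form φ, where σ(φ)(x,y;z) := φ(Jx)g(y,z) - φ(Jy)g(x,z) + φ(x)g(Jy,z) - φ(y)g(Jx,z). Then the connection ∇ₓy := ∇ᵍₓy + φ(x)y + φ(y)x - g(x,y)φ* satisfies ∇J = 0, so (M,g,J,∇) is a Kähler–Weyl structure. -/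
noncomputable section

/-- A para/pseudo-Hermitian structure `J` on `(E m, g)`: `J² = ε·Id` and
`g(Jx,Jy) = -ε g(x,y)`, where `ε = 1` (para) or `ε = -1` (pseudo). -/
structure IsHermitianJ {m : ℕ} (g : E m → E m → E m → ℝ)
    (J : E m → E m → E m) (ε : ℝ) : Prop where
  sign : ε = 1 ∨ ε = -1
  lin : ∀ p, IsLinearMap ℝ (J p)
  smooth : ∀ X : VF m, SmoothVF X → SmoothVF fun p => J p (X p)
  square : ∀ p v, J p (J p v) = ε • v
  compat : ∀ p v w, g p (J p v) (J p w) = -ε * g p v w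

/-- Integrability of `J` : the Nijenhuis tensor vanishes. -/
def Integrable {m : ℕ} (J : E m → E m → E m) (ε : ℝ) : Prop :=
  ∀ X Y : VF m, SmoothVF X → SmoothVF Y → ∀ p,
    bracket (fun q => J q (X q)) (fun q => J q (Y q)) p
      - J p (bracket (fun q => J q (X q)) Y p)
      - J p (bracket X (fun q => J q (Y q)) p)
      + ε • bracket X Y p = 0

/-- `(∇_Z Ω)(X,Y)` at `p`, where `Ω(x,y) = g(x,Jy)` is the Kähler form;
this is `(∇Ω)(X,Y;Z)` in the notation of the paper. -/
def covOmega {m : ℕ} (Dg : VF m → VF m → VF m) (g : E m → E m → E m → ℝ)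
    (J : E m → E m → E m) (X Y Z : VF m) (p : E m) : ℝ :=
  fderiv ℝ (fun q => g q (X q) (J q (Y q))) p (Z p)
    - g p (Dg Z X p) (J p (Y p)) - g p (X p) (J p (Dg Z Y p))

/-- `∇J = 0` for the connection `D`. -/
def KahlerD {m : ℕ} (D : VF m → VF m → VF m) (J : E m → E m → E m) : Prop :=
  ∀ X Y : VF m, SmoothVF X → SmoothVF Y → ∀ p,
    D X (fun q => J q (Y q)) p = J p (D X Y p)

/-- if `∇^g Ω = σ(φ)`, then the Weyl connection
`∇_X Y = ∇^g_X Y + φ(X)Y + φ(Y)X - g(X,Y)φ*` satisfies `∇J = 0`, so that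
`(M,g,J,∇)` is a Kähler–Weyl structure. -/
theorem statement10 {m : ℕ} (g : E m → E m → E m → ℝ) (hg : IsMetric g)
    (Dg : VF m → VF m → VF m) (hDg : IsLeviCivita Dg g)
    (J : E m → E m → E m) (ε : ℝ) (hJ : IsHermitianJ g J ε) (hJint : Integrable J ε)
    (φ : E m → E m → ℝ) (hφ : IsOneForm φ)
    (φs : VF m) (hφs : ∀ p w, g p (φs p) w = φ p w)
    (hσ : ∀ X Y Z : VF m, SmoothVF X → SmoothVF Y → SmoothVF Z → ∀ p,
      covOmega Dg g J X Y Z p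
        = φ p (J p (X p)) * g p (Y p) (Z p) - φ p (J p (Y p)) * g p (X p) (Z p)
            + φ p (X p) * g p (J p (Y p)) (Z p) - φ p (Y p) * g p (J p (X p)) (Z p)) :
    KahlerD (weylD Dg g φ φs) J ∧ TorsionFree (weylD Dg g φ φs) ∧
      WeylCompat (weylD Dg g φ φs) g φ := by
  obtain ⟨hConn, hTF, hMet⟩ := hDg
  have gsymm := hg.symm
  have gaddR : ∀ p v a b, g p v (a + b) = g p v a + g p v b :=
    fun p v a b => (hg.linR p v).map_add a b
  have gsmulR : ∀ p v (c : ℝ) a, g p v (c • a) = c * g p v a :=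
    fun p v c a => (hg.linR p v).map_smul c a
  have gsubR : ∀ p v a b, g p v (a - b) = g p v a - g p v b :=
    fun p v a b => (IsLinearMap.mk' _ (hg.linR p v)).map_sub a b
  have gaddL : ∀ p w a b, g p (a + b) w = g p a w + g p b w :=
    fun p w a b => (hg.linL p w).map_add a b
  have gsmulL : ∀ p w (c : ℝ) a, g p (c • a) w = c * g p a w :=
    fun p w c a => (hg.linL p w).map_smul c a
  have gsubL : ∀ p w a b, g p (a - b) w = g p a w - g p b w :=
    fun p w a b => (IsLinearMap.mk' _ (hg.linL p w)).map_sub a b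
  have Jadd : ∀ p a b, J p (a + b) = J p a + J p b := fun p a b => (hJ.lin p).map_add a b
  have Jsmul : ∀ p (c : ℝ) a, J p (c • a) = c • J p a := fun p c a => (hJ.lin p).map_smul c a
  have Jsub : ∀ p a b, J p (a - b) = J p a - J p b :=
    fun p a b => (IsLinearMap.mk' _ (hJ.lin p)).map_sub a b
  have hε : ε ≠ 0 := by rcases hJ.sign with h | h <;> simp [h]
  have hskew : ∀ p a b, g p (J p a) b = - g p a (J p b) := by
    intro p a b
    have h1 := hJ.compat p a (J p b)
    rw [hJ.square p b, gsmulR] at h1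
    exact mul_left_cancel₀ hε (by linarith)
  have key : ∀ X Y : VF m, SmoothVF X → SmoothVF Y → ∀ p,
      Dg X (fun q => J q (Y q)) p = J p (Dg X Y p)
        + ((- φ p (J p (Y p))) • X p + g p (X p) (J p (Y p)) • φs p
          + φ p (Y p) • J p (X p) + (- g p (X p) (Y p)) • J p (φs p)) := by
    intro X Y hX hY p
    have main : ∀ x : E m, g p x (Dg X (fun q => J q (Y q)) p)
        = g p x (J p (Dg X Y p)
          + ((- φ p (J p (Y p))) • X p + g p (X p) (J p (Y p)) • φs p
            + φ p (Y p) • J p (X p) + (- g p (X p) (Y p)) • J p (φs p))) := by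
      intro x
      have h1 := hMet X (fun _ => x) (fun q => J q (Y q)) hX contDiff_const (hJ.smooth Y hY) p
      have h2 := hσ (fun _ => x) Y X contDiff_const hY hX p
      simp only [covMetric, covOmega] at h1 h2
      have h3 : g p x (Dg X (fun q => J q (Y q)) p) - g p x (J p (Dg X Y p)) =
          φ p (J p x) * g p (Y p) (X p) - φ p (J p (Y p)) * g p x (X p)
            + φ p x * g p (J p (Y p)) (X p) - φ p (Y p) * g p (J p x) (X p) := by
        linarith [h1, h2]
      have e1 : φ p (J p x) = - g p x (J p (φs p)) := by
        rw [← hφs p (J p x), gsymm p (φs p) (J p x), hskew p x (φs p)]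
      have e2 : φ p x = g p x (φs p) := by
        rw [← hφs p x]; exact gsymm p (φs p) x
      have e3 : g p (J p x) (X p) = - g p x (J p (X p)) := hskew p x (X p)
      have e4 : g p (Y p) (X p) = g p (X p) (Y p) := gsymm p (Y p) (X p)
      have e5 : g p (J p (Y p)) (X p) = g p (X p) (J p (Y p)) := gsymm p (J p (Y p)) (X p)
      rw [e1, e2, e3, e4, e5] at h3
      rw [gaddR, gaddR, gaddR, gaddR, gsmulR, gsmulR, gsmulR, gsmulR]
      linarith [h3]
    have hzero : ∀ w : E m, g p (Dg X (fun q => J q (Y q)) p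
        - (J p (Dg X Y p)
          + ((- φ p (J p (Y p))) • X p + g p (X p) (J p (Y p)) • φs p
            + φ p (Y p) • J p (X p) + (- g p (X p) (Y p)) • J p (φs p)))) w = 0 := by
      intro w
      rw [gsymm, gsubR, main w, sub_self]
    have := hg.nondeg p _ hzero
    exact sub_eq_zero.mp this
  refine ⟨?_, ?_, ?_⟩
  · intro X Y hX hY p
    have hk := key X Y hX hY p
    simp only [weylD]
    rw [hk]
    simp only [Jsub, Jadd, Jsmul]
    module
  · intro X Y hX hY p
    have h := hTF X Y hX hY p
    simp only [weylD]
    rw [← h, gsymm p (Y p) (X p)]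
    module
  · intro X Y Z hX hY hZ p
    have h0 := hMet X Y Z hX hY hZ p
    simp only [covMetric, weylD] at h0 ⊢
    simp only [gsubL, gaddL, gsmulL, gsubR, gaddR, gsmulR]
    have c1 : g p (φs p) (Z p) = φ p (Z p) := hφs p (Z p)
    have c2 : g p (Y p) (φs p) = φ p (Y p) :=
      (gsymm p (Y p) (φs p)).trans (hφs p (Y p))
    have c3 : g p (Y p) (X p) = g p (X p) (Y p) := gsymm p (Y p) (X p)
    rw [c1, c2, c3]
    linear_combination h0
end
end

section
/- Let (V,⟨·,·⟩,J) be a para/pseudo-Hermitian vector space and let A ∈ ⊗⁴V* satisfy the Kähler identity A(x,y,Jz,Jw) = ∓A(x,y,z,w) together with A(x,y,z,w) = -A(y,x,z,w) and the first Bianchi identity. Then the Gray symmetrizer applied to A vanishes: G(A) = 0. -/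
/-- The Gray symmetrizer `G(A)` (with `ε = ±1` matching `J² = ± Id`). -/
def Gray {V : Type*} [AddCommGroup V] [Module ℝ V] (J : V →ₗ[ℝ] V) (ε : ℝ)
    (A : V → V → V → V → ℝ) (x y z w : V) : ℝ :=
  A x y z w + A (J x) (J y) (J z) (J w)
    + ε * A (J x) (J y) z w + ε * A x y (J z) (J w)
    + ε * A (J x) y (J z) w + ε * A x (J y) z (J w)
    + ε * A (J x) y z (J w) + ε * A x (J y) (J z) w

/-- if `A ∈ ⊗⁴V*` satisfies the Kähler identity
`A(x,y,Jz,Jw) = -ε A(x,y,z,w)`, antisymmetry in the first two slots, and the first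
Bianchi identity, then `G(A) = 0`. -/
theorem statement16 {V : Type*} [AddCommGroup V] [Module ℝ V]
    (B : V →ₗ[ℝ] V →ₗ[ℝ] ℝ) (hBs : ∀ x y, B x y = B y x)
    (hBn : ∀ v, (∀ w, B v w = 0) → v = 0)
    (J : V →ₗ[ℝ] V) (ε : ℝ) (hε : ε = 1 ∨ ε = -1)
    (hJ2 : ∀ x, J (J x) = ε • x)
    (hJB : ∀ x y, B (J x) (J y) = -ε * B x y)
    (A : MultilinearMap ℝ (fun _ : Fin 4 => V) ℝ)
    (hK : ∀ x y z w, A ![x, y, J z, J w] = -ε * A ![x, y, z, w])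
    (hA : ∀ x y z w, A ![x, y, z, w] = - A ![y, x, z, w])
    (hB : ∀ x y z w, A ![x, y, z, w] + A ![y, z, x, w] + A ![z, x, y, w] = 0) :
    ∀ x y z w, Gray J ε (fun a b c d => A ![a, b, c, d]) x y z w = 0 := by
  have hε2 : ε * ε = 1 := by rcases hε with h | h <;> rw [h] <;> norm_num
  -- move `J` from slot 4 to slot 3 with a sign
  have key : ∀ x y z w, A ![x, y, z, J w] = - A ![x, y, J z, w] := by
    intro x y z w
    have h := hK x y (J z) w
    rw [hJ2] at h
    have hupd : ![x, y, ε • z, J w] = Function.update ![x, y, z, J w] 2 (ε • z) := by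
      funext i; fin_cases i <;> simp [Function.update]
    rw [hupd, A.map_update_smul, smul_eq_mul] at h
    have hupd2 : Function.update ![x, y, z, J w] 2 z = ![x, y, z, J w] := by
      funext i; fin_cases i <;> simp [Function.update]
    rw [hupd2] at h
    have : ε * A ![x, y, z, J w] = ε * (- A ![x, y, J z, w]) := by
      rw [h]; ring
    have hεne : ε ≠ 0 := by rcases hε with h' | h' <;> rw [h'] <;> norm_num
    exact mul_left_cancel₀ hεne this
  intro x y z w
  simp only [Gray]
  linear_combination ε * hK x y z w + hK (J x) (J y) z w
    + ε * key (J x) y z w + ε * key x (J y) z w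
    - A ![x, y, z, w] * hε2
end
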